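/- (OMD error decomposition.) Suppose that for all s ∈ [t] the good event holds, i.e. ‖θ̂_s − θ*‖_{V_{s−1}} ≤ β_{s−1}, that τ_t is chosen as τ_t = τ_0 (√(1+w_t²)/w_t) t^{(1−ε)/(2(1+ε))}, and that σ_t² ≥ 2‖X_t‖²_{V_{t−1}^{-1}} β_{t−1} / (√α τ_0 t^{(1−ε)/(2(1+ε))}). Then the estimation error of the OMD iterate satisfies ‖θ̂_{t+1} − θ*‖²_{V_t} ≤ 4λS² + Σ_{s=1}^t ‖∇ℓ_s(θ̂_s)‖²_{V_s^{-1}} + 2 Σ_{s=1}^t ⟨∇ℓ̃_s(θ̂_s) − ∇ℓ_s(θ̂_s), θ̂_s − θ*⟩ + (1/α − 1) Σ_{s=1}^t ‖θ̂_s − θ*‖²_{X_s X_sᵀ/σ_s²}. -/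

import Mathlib

open Matrix Finset

noncomputable section

/-- Mahalanobis norm `‖x‖_A = √(xᵀ A x)`. -/
def Mnorm {d : ℕ} (A : Matrix (Fin d) (Fin d) ℝ) (x : Fin d → ℝ) : ℝ :=
  Real.sqrt (x ⬝ᵥ A.mulVec x)

/-- Euclidean norm on `Fin d → ℝ`. -/
def l2norm {d : ℕ} (x : Fin d → ℝ) : ℝ := Real.sqrt (∑ i, x i ^ 2)

/-- The clipping function, the derivative of the Huber loss `f_τ`. -/
def clip (τ z : ℝ) : ℝ := max (-τ) (min τ z)

/-- Gradient of the loss `ℓ(θ) = f_τ((r − ⟨θ, X⟩)/σ)`, namely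
`∇ℓ(θ) = −h_τ((r − ⟨θ, X⟩)/σ) · X/σ`. -/
def gradLoss {d : ℕ} (τ σ r : ℝ) (Xv θ : Fin d → ℝ) : Fin d → ℝ :=
  (-(clip τ ((r - θ ⬝ᵥ Xv) / σ)) / σ) • Xv

/-- Gradient of the clean (noise- and corruption-free) loss
`ℓ̃(θ) = f_τ(⟨X, θ* − θ⟩/σ)`, namely `∇ℓ̃(θ) = −h_τ(⟨X, θ* − θ⟩/σ) · X/σ`. -/
def gradCleanLoss {d : ℕ} (τ σ : ℝ) (Xv θstar θ : Fin d → ℝ) : Fin d → ℝ :=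
  (-(clip τ (Xv ⬝ᵥ (θstar - θ) / σ)) / σ) • Xv

/-- The exponent `(1−ε)/(2(1+ε))`. -/
def expP (ε : ℝ) : ℝ := (1 - ε) / (2 * (1 + ε))

section AuxLemmas
variable {d : ℕ}

lemma dot_symm {A : Matrix (Fin d) (Fin d) ℝ} (hA : A.IsHermitian) (u v : Fin d → ℝ) :
    u ⬝ᵥ A *ᵥ v = v ⬝ᵥ A *ᵥ u := by
  have hAt : Aᵀ = A := by
    rw [← Matrix.conjTranspose_eq_transpose_of_trivial]; exact hA
  rw [Matrix.dotProduct_mulVec, ← Matrix.vecMul_transpose, hAt, dotProduct_comm]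

lemma quad_expand {A : Matrix (Fin d) (Fin d) ℝ} (hA : A.IsHermitian) (u v : Fin d → ℝ) :
    (u + v) ⬝ᵥ A *ᵥ (u + v) =
      u ⬝ᵥ A *ᵥ u + 2 * (u ⬝ᵥ A *ᵥ v) + v ⬝ᵥ A *ᵥ v := by
  rw [Matrix.mulVec_add, dotProduct_add, add_dotProduct, add_dotProduct, dot_symm hA v u]
  ring

lemma psd_nonneg {A : Matrix (Fin d) (Fin d) ℝ} (hA : A.PosSemidef) (x : Fin d → ℝ) :
    0 ≤ x ⬝ᵥ A *ᵥ x := by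
  simpa using hA.dotProduct_mulVec_nonneg x

lemma Mnorm_nonneg (A : Matrix (Fin d) (Fin d) ℝ) (x : Fin d → ℝ) : 0 ≤ Mnorm A x :=
  Real.sqrt_nonneg _

lemma Mnorm_sq {A : Matrix (Fin d) (Fin d) ℝ} (hA : A.PosSemidef) (x : Fin d → ℝ) :
    Mnorm A x ^ 2 = x ⬝ᵥ A *ᵥ x :=
  Real.sq_sqrt (psd_nonneg hA x)

lemma quad_smul_expand {A : Matrix (Fin d) (Fin d) ℝ} (hA : A.IsHermitian)
    (u v : Fin d → ℝ) (lam : ℝ) :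
    (u + lam • v) ⬝ᵥ A *ᵥ (u + lam • v) =
      u ⬝ᵥ A *ᵥ u + 2 * lam * (u ⬝ᵥ A *ᵥ v) + lam ^ 2 * (v ⬝ᵥ A *ᵥ v) := by
  rw [quad_expand hA]
  simp only [Matrix.mulVec_smul, dotProduct_smul, smul_dotProduct, smul_eq_mul]
  ring

lemma cs_psd {A : Matrix (Fin d) (Fin d) ℝ} (hA : A.PosSemidef) (u v : Fin d → ℝ) :
    (u ⬝ᵥ A *ᵥ v) ^ 2 ≤ (u ⬝ᵥ A *ᵥ u) * (v ⬝ᵥ A *ᵥ v) := by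
  set a := u ⬝ᵥ A *ᵥ u with ha
  set b := u ⬝ᵥ A *ᵥ v with hb
  set c := v ⬝ᵥ A *ᵥ v with hc
  have hc0 : 0 ≤ c := psd_nonneg hA v
  have hkey : ∀ lam : ℝ, 0 ≤ a + 2 * lam * b + lam ^ 2 * c := by
    intro lam
    have h := psd_nonneg hA (u + lam • v)
    rwa [quad_smul_expand hA.isHermitian] at h
  rcases eq_or_lt_of_le hc0 with h0 | hpos
  · have hb0 : b = 0 := by
      by_contra hbne
      have h1 := hkey (-(a + 1) / (2 * b))
      rw [← h0] at h1
      have h2 : a + 2 * (-(a + 1) / (2 * b)) * b = -1 := by field_simp; ring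
      nlinarith
    have ha0 : 0 ≤ a := by simpa using hkey 0
    rw [hb0, ← h0]
    nlinarith
  · have h := hkey (-b / c)
    have h2 : a + 2 * (-b / c) * b + (-b / c) ^ 2 * c = a - b ^ 2 / c := by
      field_simp; ring
    rw [h2] at h
    have hba : b ^ 2 / c ≤ a := by linarith
    calc b ^ 2 = b ^ 2 / c * c := by field_simp
      _ ≤ a * c := mul_le_mul_of_nonneg_right hba hpos.le

lemma vecMulVec_mulVec' (w v x : Fin d → ℝ) :
    (Matrix.vecMulVec w v) *ᵥ x = (v ⬝ᵥ x) • w := by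
  ext i
  simp [Matrix.mulVec, Matrix.vecMulVec_apply, dotProduct, Finset.mul_sum,
    mul_comm, mul_assoc, mul_left_comm]

lemma l2norm_eq (x : Fin d → ℝ) :
    l2norm x = ‖(WithLp.equiv 2 (Fin d → ℝ)).symm x‖ := by
  rw [EuclideanSpace.norm_eq]
  unfold l2norm
  congr 1
  refine Finset.sum_congr rfl fun i _ => ?_
  simp [Real.norm_eq_abs, sq_abs]

lemma l2norm_comb {P z : Fin d → ℝ} {S lam : ℝ} (hP : l2norm P ≤ S) (hz : l2norm z ≤ S)
    (h0 : 0 ≤ lam) (h1 : lam ≤ 1) : l2norm (P + lam • (z - P)) ≤ S := by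
  have hrw : P + lam • (z - P) = (1 - lam) • P + lam • z := by
    ext i; simp [smul_eq_mul]; ring
  rw [hrw, l2norm_eq]
  rw [l2norm_eq] at hP hz
  calc ‖(WithLp.equiv 2 (Fin d → ℝ)).symm ((1 - lam) • P + lam • z)‖
      = ‖(1 - lam) • (WithLp.equiv 2 (Fin d → ℝ)).symm P
          + lam • (WithLp.equiv 2 (Fin d → ℝ)).symm z‖ := by
        rfl
    _ ≤ ‖(1 - lam) • (WithLp.equiv 2 (Fin d → ℝ)).symm P‖
          + ‖lam • (WithLp.equiv 2 (Fin d → ℝ)).symm z‖ := norm_add_le _ _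
    _ = (1 - lam) * ‖(WithLp.equiv 2 (Fin d → ℝ)).symm P‖
          + lam * ‖(WithLp.equiv 2 (Fin d → ℝ)).symm z‖ := by
        rw [norm_smul, norm_smul, Real.norm_eq_abs, Real.norm_eq_abs,
          abs_of_nonneg (by linarith), abs_of_nonneg h0]
    _ ≤ (1 - lam) * S + lam * S := by
        apply add_le_add
        · exact mul_le_mul_of_nonneg_left hP (by linarith)
        · exact mul_le_mul_of_nonneg_left hz h0
    _ = S := by ring

lemma proj_ineq {A : Matrix (Fin d) (Fin d) ℝ} (hA : A.PosSemidef) (P y z : Fin d → ℝ)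
    (hmin : ∀ lam : ℝ, 0 ≤ lam → lam ≤ 1 →
      Mnorm A (P - y) ≤ Mnorm A (P + lam • (z - P) - y)) :
    0 ≤ (P - y) ⬝ᵥ A *ᵥ (z - P) := by
  set a := (P - y) ⬝ᵥ A *ᵥ (z - P) with ha
  set C := (z - P) ⬝ᵥ A *ᵥ (z - P) with hC
  have hC0 : 0 ≤ C := psd_nonneg hA _
  by_contra hneg
  push_neg at hneg
  set lam := min 1 (-a / (C + 1)) with hlam
  have hlam0 : 0 < lam :=
    lt_min one_pos (div_pos (by linarith) (by linarith))
  have hlam1 : lam ≤ 1 := min_le_left _ _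
  have hq := hmin lam (le_of_lt hlam0) hlam1
  have hrw : P + lam • (z - P) - y = (P - y) + lam • (z - P) := by
    ext i; simp [smul_eq_mul]; ring
  have hquad : (P + lam • (z - P) - y) ⬝ᵥ A *ᵥ (P + lam • (z - P) - y)
      = (P - y) ⬝ᵥ A *ᵥ (P - y) + 2 * lam * a + lam ^ 2 * C := by
    rw [hrw, quad_smul_expand hA.isHermitian]
  have hle : (P - y) ⬝ᵥ A *ᵥ (P - y) ≤
      (P + lam • (z - P) - y) ⬝ᵥ A *ᵥ (P + lam • (z - P) - y) := by
    have h1 := psd_nonneg hA (P - y)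
    have h2 := psd_nonneg hA (P + lam • (z - P) - y)
    have h3 := pow_le_pow_left₀ (Real.sqrt_nonneg _) hq 2
    unfold Mnorm at h3
    rwa [Real.sq_sqrt h1, Real.sq_sqrt h2] at h3
  rw [hquad] at hle
  have hmain : 0 ≤ 2 * lam * a + lam ^ 2 * C := by linarith
  have hlamC : lam * C ≤ -a := by
    have h1 : lam ≤ -a / (C + 1) := min_le_right _ _
    have h2 : lam * C ≤ -a / (C + 1) * C := mul_le_mul_of_nonneg_right h1 hC0
    have h3 : -a / (C + 1) * C ≤ -a := by
      rw [div_mul_eq_mul_div, div_le_iff₀ (by linarith)]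
      nlinarith
    linarith
  nlinarith

lemma smul_outer_posSemidef {c : ℝ} (hc : 0 ≤ c) (w : Fin d → ℝ) :
    (c • Matrix.vecMulVec w w).PosSemidef := by
  refine Matrix.PosSemidef.of_dotProduct_mulVec_nonneg ?_ ?_
  · show (c • Matrix.vecMulVec w w)ᴴ = _
    ext i j
    simp [Matrix.vecMulVec_apply, mul_comm]
  · intro x
    rw [Matrix.smul_mulVec, vecMulVec_mulVec']
    have hrw : x ⬝ᵥ c • (w ⬝ᵥ x) • w = c * ((w ⬝ᵥ x) * (x ⬝ᵥ w)) := by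
      rw [dotProduct_smul, dotProduct_smul]; simp [smul_eq_mul, mul_assoc]
    simp only [star_trivial, hrw, dotProduct_comm x w]
    nlinarith [sq_nonneg (w ⬝ᵥ x)]

lemma smul_one_posDef {lam : ℝ} (hlam : 0 < lam) :
    (lam • (1 : Matrix (Fin d) (Fin d) ℝ)).PosDef := by
  refine Matrix.PosDef.of_dotProduct_mulVec_pos ?_ ?_
  · show (lam • (1 : Matrix (Fin d) (Fin d) ℝ))ᴴ = _
    simp
  · intro x hx
    rw [Matrix.smul_mulVec, Matrix.one_mulVec, dotProduct_smul]
    obtain ⟨i, hi⟩ := Function.ne_iff.mp hx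
    have hxx : 0 < x ⬝ᵥ x := by
      refine Finset.sum_pos' (fun j _ => mul_self_nonneg _) ⟨i, Finset.mem_univ i, ?_⟩
      exact mul_self_pos.mpr hi
    simpa [smul_eq_mul] using mul_pos hlam hxx


lemma abs_dot_le {u qX qD N b : ℝ} (hcs : u ^ 2 ≤ qX * qD) (hqX : N ^ 2 = qX)
    (hqD : qD ≤ b ^ 2) (hqD0 : 0 ≤ qD) (hN0 : 0 ≤ N) (hb : 0 ≤ b) : |u| ≤ N * b := by
  have h1 : u ^ 2 ≤ (N * b) ^ 2 := by nlinarith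
  calc |u| = Real.sqrt (u ^ 2) := (Real.sqrt_sq_eq_abs _).symm
    _ ≤ Real.sqrt ((N * b) ^ 2) := Real.sqrt_le_sqrt h1
    _ = N * b := Real.sqrt_sq (by positivity)

lemma chain_scalar {N b σv sa τa sp wv τ ua : ℝ}
    (hN : 0 < N) (hb : 0 ≤ b) (hσ : 0 < σv) (hsa : 0 < sa) (hτa : 0 < τa) (hsp : 0 < sp)
    (habs : ua ≤ N * b)
    (h2 : 2 * N ^ 2 * b ≤ σv ^ 2 * (sa * τa * sp))
    (hwv : wv = N / (σv * sa))
    (hτv : τ = τa * (Real.sqrt (1 + wv ^ 2) / wv) * sp) :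
    ua / σv ≤ τ := by
  have hwpos : 0 < wv := by rw [hwv]; positivity
  have hsq1 : 1 ≤ Real.sqrt (1 + wv ^ 2) := by
    have h := Real.sqrt_le_sqrt (by nlinarith : (1:ℝ) ≤ 1 + wv ^ 2)
    rwa [Real.sqrt_one] at h
  have h3 : ua / σv ≤ τa * sp / wv := by
    rw [hwv, div_div_eq_mul_div, div_le_div_iff₀ hσ (by positivity)]
    nlinarith [mul_le_mul_of_nonneg_right habs hN.le, mul_nonneg (sq_nonneg N) hb]
  have h4 : τa * sp / wv ≤ τ := by
    rw [hτv]
    calc τa * sp / wv = τa * (1 / wv) * sp := by ring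
      _ ≤ τa * (Real.sqrt (1 + wv ^ 2) / wv) * sp := by gcongr
  linarith

end AuxLemmas

set_option maxHeartbeats 1600000


/-- **OMD error decomposition (Lemma 3).** On the good event, with `τ_s` chosen
as `τ₀ √(1+w_s²)/w_s · s^{(1−ε)/(2(1+ε))}` and `σ_s²` bounded below as stated,
the estimation error satisfies
`‖θ̂_{t+1} − θ*‖²_{V_t} ≤ 4λS² + Σ_s ‖∇ℓ_s(θ̂_s)‖²_{V_s⁻¹}`
`+ 2 Σ_s ⟨∇ℓ̃_s(θ̂_s) − ∇ℓ_s(θ̂_s), θ̂_s − θ*⟩`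
`+ (1/α − 1) Σ_s ‖θ̂_s − θ*‖²_{X_s X_sᵀ/σ_s²}`. -/
theorem omd_error_decomposition
    (d t : ℕ) (ht : 1 ≤ t)
    (ε L S lam alpha τ0 : ℝ)
    (hε : 0 < ε) (hε1 : ε ≤ 1) (halpha : 0 < alpha) (hlam : 0 < lam)
    (hτ0 : 0 < τ0)
    (θstar : Fin d → ℝ) (hθS : l2norm θstar ≤ S)
    (X : ℕ → Fin d → ℝ) (hXL : ∀ s, l2norm (X s) ≤ L)
    (η c r σ w τv : ℕ → ℝ) (β : ℕ → ℝ) (hβ : ∀ s, 0 ≤ β s)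
    (hatθ : ℕ → Fin d → ℝ) (V : ℕ → Matrix (Fin d) (Fin d) ℝ)
    (hσpos : ∀ s, 0 < σ s)
    -- observed rewards
    (hr : ∀ s, r s = X s ⬝ᵥ θstar + η s + c s)
    -- design matrix recursion
    (hV0 : V 0 = lam • (1 : Matrix (Fin d) (Fin d) ℝ))
    (hV : ∀ s ∈ Finset.Icc 1 t,
      V s = V (s - 1) + (1 / (alpha * σ s ^ 2)) • vecMulVec (X s) (X s))
    -- auxiliary quantity w_s
    (hw : ∀ s ∈ Finset.Icc 1 t,
      w s = (Real.sqrt alpha)⁻¹ * Mnorm (V (s - 1))⁻¹ ((σ s)⁻¹ • X s))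
    -- OMD iterates (projected gradient steps)
    (hθ1 : hatθ 1 = 0)
    (hupd : ∀ s ∈ Finset.Icc 1 t,
      l2norm (hatθ (s + 1)) ≤ S ∧
      ∀ θ : Fin d → ℝ, l2norm θ ≤ S →
        Mnorm (V s) (hatθ (s + 1) -
            (hatθ s - (V s)⁻¹ *ᵥ
              gradLoss (τv s) (σ s) (r s) (X s) (hatθ s))) ≤
          Mnorm (V s) (θ -
            (hatθ s - (V s)⁻¹ *ᵥ
              gradLoss (τv s) (σ s) (r s) (X s) (hatθ s))))
    -- the good event holds up to round t
    (hgood : ∀ s ∈ Finset.Icc 1 t,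
      Mnorm (V (s - 1)) (hatθ s - θstar) ≤ β (s - 1))
    -- Huber threshold τ_s
    (hτ : ∀ s ∈ Finset.Icc 1 t,
      τv s = τ0 * (Real.sqrt (1 + w s ^ 2) / w s) * (s : ℝ) ^ expP ε)
    -- lower bound condition on σ_s
    (hσcond : ∀ s ∈ Finset.Icc 1 t,
      2 * Mnorm (V (s - 1))⁻¹ (X s) ^ 2 * β (s - 1) /
          (Real.sqrt alpha * τ0 * (s : ℝ) ^ expP ε) ≤ σ s ^ 2) :
    Mnorm (V t) (hatθ (t + 1) - θstar) ^ 2 ≤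
      4 * lam * S ^ 2 +
        ∑ s ∈ Finset.Icc 1 t,
          Mnorm (V s)⁻¹ (gradLoss (τv s) (σ s) (r s) (X s) (hatθ s)) ^ 2 +
        2 * ∑ s ∈ Finset.Icc 1 t,
          (gradCleanLoss (τv s) (σ s) (X s) θstar (hatθ s) -
              gradLoss (τv s) (σ s) (r s) (X s) (hatθ s)) ⬝ᵥ
            (hatθ s - θstar) +
        (1 / alpha - 1) * ∑ s ∈ Finset.Icc 1 t,
          (X s ⬝ᵥ (hatθ s - θstar) / σ s) ^ 2 := by
  -- positive definiteness of the design matrices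
  have hVpd : ∀ s, s ≤ t → (V s).PosDef := by
    intro s
    induction s with
    | zero =>
      intro _
      rw [hV0]
      exact smul_one_posDef hlam
    | succ n ih =>
      intro hle
      have hmem : n + 1 ∈ Finset.Icc 1 t := Finset.mem_Icc.mpr ⟨by omega, hle⟩
      have hrec := hV (n + 1) hmem
      rw [Nat.add_sub_cancel] at hrec
      rw [hrec]
      have hc : (0:ℝ) ≤ 1 / (alpha * σ (n+1) ^ 2) := by positivity
      exact (ih (by omega)).add_posSemidef (smul_outer_posSemidef hc _)
  -- the per-step inequality
  have hstep : ∀ s ∈ Finset.Icc 1 t,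
      (hatθ (s+1) - θstar) ⬝ᵥ V s *ᵥ (hatθ (s+1) - θstar) ≤
        (hatθ s - θstar) ⬝ᵥ V (s-1) *ᵥ (hatθ s - θstar)
        + gradLoss (τv s) (σ s) (r s) (X s) (hatθ s) ⬝ᵥ
            (V s)⁻¹ *ᵥ gradLoss (τv s) (σ s) (r s) (X s) (hatθ s)
        + 2 * ((gradCleanLoss (τv s) (σ s) (X s) θstar (hatθ s) -
            gradLoss (τv s) (σ s) (r s) (X s) (hatθ s)) ⬝ᵥ (hatθ s - θstar))
        + (1 / alpha - 1) * (X s ⬝ᵥ (hatθ s - θstar) / σ s) ^ 2 := by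
    intro s hs
    obtain ⟨hs1, hst⟩ := Finset.mem_Icc.mp hs
    obtain ⟨hPfeas, hPmin⟩ := hupd s hs
    set g := gradLoss (τv s) (σ s) (r s) (X s) (hatθ s) with hgdef
    set gc := gradCleanLoss (τv s) (σ s) (X s) θstar (hatθ s) with hgcdef
    set Δ := hatθ s - θstar with hΔ
    have hApd : (V s).PosDef := hVpd s hst
    have hBpd : (V (s-1)).PosDef := hVpd (s-1) (le_trans (Nat.sub_le s 1) hst)
    have hAinv : V s * (V s)⁻¹ = 1 :=
      Matrix.mul_nonsing_inv _ ((Matrix.isUnit_iff_isUnit_det _).mp hApd.isUnit)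
    have hBinv : V (s-1) * (V (s-1))⁻¹ = 1 :=
      Matrix.mul_nonsing_inv _ ((Matrix.isUnit_iff_isUnit_det _).mp hBpd.isUnit)
    have hAinvpd : (V s)⁻¹.PosDef := hApd.inv
    have hBinvpd : (V (s-1))⁻¹.PosDef := hBpd.inv
    set y := hatθ s - (V s)⁻¹ *ᵥ g with hy
    have hσs : (0:ℝ) < σ s := hσpos s
    -- projection inequality
    have hproj : 0 ≤ (hatθ (s+1) - y) ⬝ᵥ V s *ᵥ (θstar - hatθ (s+1)) := by
      apply proj_ineq hApd.posSemidef
      intro lamb h0 h1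
      exact hPmin _ (l2norm_comb hPfeas hθS h0 h1)
    have hexp1 : (hatθ (s+1) - θstar) ⬝ᵥ V s *ᵥ (hatθ (s+1) - θstar) ≤
        (y - θstar) ⬝ᵥ V s *ᵥ (y - θstar) := by
      have hdec : y - θstar = (y - hatθ (s+1)) + (hatθ (s+1) - θstar) := by
        ext i; simp
      have hq := quad_expand hApd.isHermitian (y - hatθ (s+1)) (hatθ (s+1) - θstar)
      rw [← hdec] at hq
      have hcross : 0 ≤ (y - hatθ (s+1)) ⬝ᵥ V s *ᵥ (hatθ (s+1) - θstar) := by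
        have hr1 : y - hatθ (s+1) = -(hatθ (s+1) - y) := by ext i; simp [neg_sub]
        have hr2 : hatθ (s+1) - θstar = -(θstar - hatθ (s+1)) := by ext i; simp [neg_sub]
        rw [hr1, hr2, Matrix.mulVec_neg, dotProduct_neg, neg_dotProduct, neg_neg]
        exact hproj
      have hq0 := psd_nonneg hApd.posSemidef (y - hatθ (s+1))
      linarith
    have hexp2 : (y - θstar) ⬝ᵥ V s *ᵥ (y - θstar)
        = Δ ⬝ᵥ V s *ᵥ Δ - 2 * (g ⬝ᵥ Δ) + g ⬝ᵥ (V s)⁻¹ *ᵥ g := by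
      have hyd : y - θstar = Δ + (-1 : ℝ) • ((V s)⁻¹ *ᵥ g) := by
        rw [hy, hΔ]; ext i; simp; ring
      rw [hyd, quad_smul_expand hApd.isHermitian]
      have h1 : Δ ⬝ᵥ V s *ᵥ ((V s)⁻¹ *ᵥ g) = g ⬝ᵥ Δ := by
        rw [Matrix.mulVec_mulVec, hAinv, Matrix.one_mulVec, dotProduct_comm]
      have h2 : ((V s)⁻¹ *ᵥ g) ⬝ᵥ V s *ᵥ ((V s)⁻¹ *ᵥ g) = g ⬝ᵥ (V s)⁻¹ *ᵥ g := by
        rw [Matrix.mulVec_mulVec, hAinv, Matrix.one_mulVec, dotProduct_comm]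
      rw [h1, h2]; ring
    have hexp3 : Δ ⬝ᵥ V s *ᵥ Δ
        = Δ ⬝ᵥ V (s-1) *ᵥ Δ + (1/alpha) * (X s ⬝ᵥ Δ / σ s) ^ 2 := by
      rw [hV s hs, Matrix.add_mulVec, dotProduct_add, Matrix.smul_mulVec,
        vecMulVec_mulVec', dotProduct_smul, dotProduct_smul, smul_eq_mul, smul_eq_mul,
        dotProduct_comm Δ (X s)]
      field_simp
    -- key inequality : u² ≤ 2 ⟨∇ℓ̃, Δ⟩
    have hgcΔ : gc ⬝ᵥ Δ =
        (-(clip (τv s) (X s ⬝ᵥ (θstar - hatθ s) / σ s)) / σ s) * (X s ⬝ᵥ Δ) := by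
      rw [hgcdef]; unfold gradCleanLoss
      rw [smul_dotProduct, smul_eq_mul]
    have hzneg : X s ⬝ᵥ (θstar - hatθ s) = -(X s ⬝ᵥ Δ) := by
      rw [hΔ, dotProduct_sub, dotProduct_sub]; ring
    have hkey : (X s ⬝ᵥ Δ / σ s) ^ 2 ≤ 2 * (gc ⬝ᵥ Δ) := by
      rcases eq_or_ne (X s ⬝ᵥ Δ) 0 with h0 | hne
      · rw [hgcΔ, h0]; simp
      · -- nontrivial case
        have hcs0 := cs_psd hBpd.posSemidef ((V (s-1))⁻¹ *ᵥ X s) Δ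
        have hq1 : ((V (s-1))⁻¹ *ᵥ X s) ⬝ᵥ V (s-1) *ᵥ ((V (s-1))⁻¹ *ᵥ X s)
            = X s ⬝ᵥ (V (s-1))⁻¹ *ᵥ X s := by
          rw [Matrix.mulVec_mulVec, hBinv, Matrix.one_mulVec, dotProduct_comm]
        have hq2 : ((V (s-1))⁻¹ *ᵥ X s) ⬝ᵥ V (s-1) *ᵥ Δ = X s ⬝ᵥ Δ := by
          rw [dot_symm hBpd.isHermitian, Matrix.mulVec_mulVec, hBinv,
            Matrix.one_mulVec, dotProduct_comm]
        rw [hq1, hq2] at hcs0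
        have hNsq : Mnorm (V (s-1))⁻¹ (X s) ^ 2 = X s ⬝ᵥ (V (s-1))⁻¹ *ᵥ X s :=
          Mnorm_sq hBinvpd.posSemidef _
        have hqBΔ : Δ ⬝ᵥ V (s-1) *ᵥ Δ ≤ β (s-1) ^ 2 := by
          rw [← Mnorm_sq hBpd.posSemidef]
          exact pow_le_pow_left₀ (Mnorm_nonneg _ _) (hgood s hs) 2
        have hΔq0 : 0 ≤ Δ ⬝ᵥ V (s-1) *ᵥ Δ := psd_nonneg hBpd.posSemidef _
        have hN0 : 0 < Mnorm (V (s-1))⁻¹ (X s) := by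
          rcases (Mnorm_nonneg (V (s-1))⁻¹ (X s)).lt_or_eq with h | h
          · exact h
          · exfalso; apply hne
            have hz : X s ⬝ᵥ (V (s-1))⁻¹ *ᵥ X s = 0 := by rw [← hNsq, ← h]; ring
            rw [hz, zero_mul] at hcs0
            have hle0 : (X s ⬝ᵥ Δ) ^ 2 ≤ 0 := hcs0
            exact sq_eq_zero_iff.mp (le_antisymm hle0 (sq_nonneg _))
        have habs : |X s ⬝ᵥ Δ| ≤ Mnorm (V (s-1))⁻¹ (X s) * β (s-1) :=
          abs_dot_le hcs0 hNsq hqBΔ hΔq0 (Mnorm_nonneg _ _) (hβ (s-1))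
        have hsqalpha : 0 < Real.sqrt alpha := Real.sqrt_pos.mpr halpha
        have hwval : w s = Mnorm (V (s-1))⁻¹ (X s) / (σ s * Real.sqrt alpha) := by
          rw [hw s hs]
          unfold Mnorm
          rw [smul_dotProduct, Matrix.mulVec_smul, dotProduct_smul, smul_eq_mul,
            smul_eq_mul, ← mul_assoc, Real.sqrt_mul (by positivity),
            Real.sqrt_mul_self (by positivity : (0:ℝ) ≤ (σ s)⁻¹)]
          field_simp
        have hsp : (0:ℝ) < (s:ℝ) ^ expP ε := by
          apply Real.rpow_pos_of_pos
          exact_mod_cast Nat.pos_of_ne_zero (by omega)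
        have hσc := hσcond s hs
        have hD : (0:ℝ) < Real.sqrt alpha * τ0 * (s:ℝ) ^ expP ε := by positivity
        have h2 : 2 * Mnorm (V (s-1))⁻¹ (X s) ^ 2 * β (s-1)
            ≤ σ s ^ 2 * (Real.sqrt alpha * τ0 * (s:ℝ) ^ expP ε) := by
          rw [div_le_iff₀ hD] at hσc; linarith
        have hutau : |X s ⬝ᵥ Δ / σ s| ≤ τv s := by
          rw [abs_div, abs_of_pos hσs]
          exact chain_scalar hN0 (hβ (s-1)) hσs hsqalpha hτ0 hsp habs h2 hwval (hτ s hs)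
        have hclip : clip (τv s) (X s ⬝ᵥ (θstar - hatθ s) / σ s)
            = X s ⬝ᵥ (θstar - hatθ s) / σ s := by
          have hzabs : |X s ⬝ᵥ (θstar - hatθ s) / σ s| ≤ τv s := by
            rw [hzneg, neg_div, abs_neg]; exact hutau
          obtain ⟨hl, hr'⟩ := abs_le.mp hzabs
          unfold clip
          rw [min_eq_right hr', max_eq_right hl]
        rw [hgcΔ, hclip, hzneg]
        have hgcval : -(-(X s ⬝ᵥ Δ) / σ s) / σ s * (X s ⬝ᵥ Δ)
            = (X s ⬝ᵥ Δ / σ s) ^ 2 := by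
          field_simp
        rw [hgcval]
        linarith [sq_nonneg (X s ⬝ᵥ Δ / σ s)]
      -- end nontrivial
    -- combine
    have hsub : (gc - g) ⬝ᵥ Δ = gc ⬝ᵥ Δ - g ⬝ᵥ Δ := sub_dotProduct _ _ _
    have halpha' : (1/alpha) * (X s ⬝ᵥ Δ / σ s) ^ 2 - 2 * (gc ⬝ᵥ Δ)
        ≤ (1/alpha - 1) * (X s ⬝ᵥ Δ / σ s) ^ 2 := by linarith
    calc (hatθ (s+1) - θstar) ⬝ᵥ V s *ᵥ (hatθ (s+1) - θstar)
        ≤ (y - θstar) ⬝ᵥ V s *ᵥ (y - θstar) := hexp1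
      _ = Δ ⬝ᵥ V s *ᵥ Δ - 2 * (g ⬝ᵥ Δ) + g ⬝ᵥ (V s)⁻¹ *ᵥ g := hexp2
      _ = Δ ⬝ᵥ V (s-1) *ᵥ Δ + (1/alpha) * (X s ⬝ᵥ Δ / σ s) ^ 2
            - 2 * (g ⬝ᵥ Δ) + g ⬝ᵥ (V s)⁻¹ *ᵥ g := by rw [hexp3]
      _ ≤ Δ ⬝ᵥ V (s-1) *ᵥ Δ + g ⬝ᵥ (V s)⁻¹ *ᵥ g + 2 * ((gc - g) ⬝ᵥ Δ)
            + (1/alpha - 1) * (X s ⬝ᵥ Δ / σ s) ^ 2 := by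
          rw [hsub]; linarith
  -- telescoping
  have htel : ∀ n, n ≤ t →
      (hatθ (n+1) - θstar) ⬝ᵥ V n *ᵥ (hatθ (n+1) - θstar) ≤
        (hatθ 1 - θstar) ⬝ᵥ V 0 *ᵥ (hatθ 1 - θstar) +
        ∑ s ∈ Finset.Icc 1 n,
          (gradLoss (τv s) (σ s) (r s) (X s) (hatθ s) ⬝ᵥ
              (V s)⁻¹ *ᵥ gradLoss (τv s) (σ s) (r s) (X s) (hatθ s)
            + 2 * ((gradCleanLoss (τv s) (σ s) (X s) θstar (hatθ s) -
                gradLoss (τv s) (σ s) (r s) (X s) (hatθ s)) ⬝ᵥ (hatθ s - θstar))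
            + (1 / alpha - 1) * (X s ⬝ᵥ (hatθ s - θstar) / σ s) ^ 2) := by
    intro n
    induction n with
    | zero => intro _; simp
    | succ m ih =>
      intro hm
      have h1 := hstep (m+1) (Finset.mem_Icc.mpr ⟨by omega, hm⟩)
      rw [Nat.add_sub_cancel] at h1
      have h2 := ih (by omega)
      rw [Finset.sum_Icc_succ_top (by omega : 1 ≤ m+1)]
      linarith
  have hmain := htel t le_rfl
  -- initial term
  have hS0 : 0 ≤ S := le_trans (Real.sqrt_nonneg _) hθS
  have hinit : (hatθ 1 - θstar) ⬝ᵥ V 0 *ᵥ (hatθ 1 - θstar) ≤ 4 * lam * S ^ 2 := by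
    rw [hθ1, hV0]
    have h1 : (0 - θstar) ⬝ᵥ (lam • (1 : Matrix (Fin d) (Fin d) ℝ)) *ᵥ (0 - θstar)
        = lam * ∑ i, θstar i ^ 2 := by
      rw [Matrix.smul_mulVec, Matrix.one_mulVec, dotProduct_smul, smul_eq_mul]
      congr 1
      unfold dotProduct
      refine Finset.sum_congr rfl fun i _ => ?_
      simp [sq]
    rw [h1]
    have h2 : ∑ i, θstar i ^ 2 ≤ S ^ 2 := by
      have h3 : (l2norm θstar) ^ 2 = ∑ i, θstar i ^ 2 :=
        Real.sq_sqrt (by positivity)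
      rw [← h3]
      exact pow_le_pow_left₀ (Real.sqrt_nonneg _) hθS 2
    nlinarith
  -- rewrite the sum
  have hsum : ∑ s ∈ Finset.Icc 1 t,
      (gradLoss (τv s) (σ s) (r s) (X s) (hatθ s) ⬝ᵥ
          (V s)⁻¹ *ᵥ gradLoss (τv s) (σ s) (r s) (X s) (hatθ s)
        + 2 * ((gradCleanLoss (τv s) (σ s) (X s) θstar (hatθ s) -
            gradLoss (τv s) (σ s) (r s) (X s) (hatθ s)) ⬝ᵥ (hatθ s - θstar))
        + (1 / alpha - 1) * (X s ⬝ᵥ (hatθ s - θstar) / σ s) ^ 2)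
      = ∑ s ∈ Finset.Icc 1 t,
          Mnorm (V s)⁻¹ (gradLoss (τv s) (σ s) (r s) (X s) (hatθ s)) ^ 2 +
        2 * ∑ s ∈ Finset.Icc 1 t,
          (gradCleanLoss (τv s) (σ s) (X s) θstar (hatθ s) -
              gradLoss (τv s) (σ s) (r s) (X s) (hatθ s)) ⬝ᵥ (hatθ s - θstar) +
        (1 / alpha - 1) * ∑ s ∈ Finset.Icc 1 t,
          (X s ⬝ᵥ (hatθ s - θstar) / σ s) ^ 2 := by
    rw [Finset.sum_add_distrib, Finset.sum_add_distrib, Finset.mul_sum, Finset.mul_sum]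
    congr 1
    congr 1
    refine Finset.sum_congr rfl fun s hs => ?_
    rw [Mnorm_sq ((hVpd s (Finset.mem_Icc.mp hs).2).inv).posSemidef]
  rw [Mnorm_sq (hVpd t le_rfl).posSemidef]
  rw [hsum] at hmain
  linarith
  

end
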